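/- For any (possibly randomized) allocation policy A and any nested sequence Ẽ ∈ E^nest_{n,m,q}, there exists a nested sequence E' ∈ E^nest_{n,m,q} such that WF(Ẽ) ⪯ 𝔼[A(E')] and OPT(Ẽ) ∼ OPT(E') (i.e., OPT(E') is a permutation of OPT(Ẽ)). -/

import Mathlib

open Finset MeasureTheory

/-- A request sequence with `n` offline nodes and `m` online nodes: each online
node `t` has a nonempty neighborhood `N t ⊆ [n]` and a positive quantity `q t`. -/
structure ReqSeq (n m : ℕ) where
  N : Fin m → Finset (Fin n)
  q : Fin m → ℝ
  N_nonempty : ∀ t, (N t).Nonempty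
  q_pos : ∀ t, 0 < q t

/-- `Δ(N, q)`: feasible allocations for a single online node. -/
def allocSet (n : ℕ) (N : Finset (Fin n)) (qt : ℝ) : Set (Fin n → ℝ) :=
  {x | (∀ i, 0 ≤ x i) ∧ (∀ i, i ∉ N → x i = 0) ∧ ∑ i, x i = qt}

/-- A feasible allocation trajectory on a request sequence. -/
def Feasible {n m : ℕ} (E : ReqSeq n m) (x : Fin m → Fin n → ℝ) : Prop :=
  ∀ t, x t ∈ allocSet n (E.N t) (E.q t)

/-- `Δ(E)`: the Minkowski sum of the per-node allocation sets (feasible load vectors). -/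
def loads {n m : ℕ} (E : ReqSeq n m) : Set (Fin n → ℝ) :=
  {ℓ | ∃ x, Feasible E x ∧ ℓ = ∑ t, x t}

/-- Sum of the `k` largest entries of `x`. -/
noncomputable def topSum {n : ℕ} (x : Fin n → ℝ) (k : ℕ) : ℝ :=
  sSup ((fun s : Finset (Fin n) => ∑ i ∈ s, x i) '' {s | s.card = k})

/-- `Majorizes x y` means `x ⪰ y`: equal total sums and every `k`-largest-entries
sum of `x` dominates that of `y`. -/
def Majorizes {n : ℕ} (x y : Fin n → ℝ) : Prop :=
  (∑ i, x i = ∑ i, y i) ∧ ∀ k ≤ n, topSum y k ≤ topSum x k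

/-- `f` is Schur-concave on the nonnegative orthant: `x ⪯ y → f x ≥ f y`. -/
def SchurConcave {n : ℕ} (f : (Fin n → ℝ) → ℝ) : Prop :=
  ∀ x y : Fin n → ℝ, (∀ i, 0 ≤ x i) → (∀ i, 0 ≤ y i) → Majorizes y x → f y ≤ f x

/-- `g` is Schur-convex on the nonnegative orthant: `x ⪯ y → g x ≤ g y`. -/
def SchurConvex {n : ℕ} (g : (Fin n → ℝ) → ℝ) : Prop :=
  ∀ x y : Fin n → ℝ, (∀ i, 0 ≤ x i) → (∀ i, 0 ≤ y i) → Majorizes y x → g x ≤ g y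

/-- Cumulative load strictly before online node `t`. -/
def prevLoad {n m : ℕ} (x : Fin m → Fin n → ℝ) (t : Fin m) : Fin n → ℝ :=
  fun i => ∑ s ∈ Finset.univ.filter (fun s => s < t), x s i

/-- Minimum of `v` over the neighborhood of online node `t`. -/
noncomputable def reqMinOn {n m : ℕ} (E : ReqSeq n m) (t : Fin m) (v : Fin n → ℝ) : ℝ :=
  (E.N t).inf' (E.N_nonempty t) v

/-- `x` is the water-filling allocation trajectory on `E`: at each arrival `t`,
`x t` maximizes the minimum post-allocation load over `N t`. -/
def IsWFAlloc {n m : ℕ} (E : ReqSeq n m) (x : Fin m → Fin n → ℝ) : Prop :=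
  Feasible E x ∧
  ∀ t, ∀ y ∈ allocSet n (E.N t) (E.q t),
    reqMinOn E t (fun i => y i + prevLoad x t i) ≤ reqMinOn E t (fun i => x t i + prevLoad x t i)

-- The load vector produced by water-filling (via choice; the trajectory exists and is unique).
open Classical in
noncomputable def wfLoad {n m : ℕ} (E : ReqSeq n m) : Fin n → ℝ :=
  if h : ∃ x, IsWFAlloc E x then ∑ t, h.choose t else 0

/-- `ℓ` is the majorization-minimal element of `Δ(E)`. -/
def IsOpt {n m : ℕ} (E : ReqSeq n m) (ℓ : Fin n → ℝ) : Prop :=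
  ℓ ∈ loads E ∧ ∀ ℓ' ∈ loads E, Majorizes ℓ' ℓ

-- `OPT(E)`, the majorization-minimal feasible load vector (via choice).
open Classical in
noncomputable def optLoad {n m : ℕ} (E : ReqSeq n m) : Fin n → ℝ :=
  if h : ∃ ℓ, IsOpt E ℓ then h.choose else 0

/-- A request sequence is nested if `N 1 ⊇ N 2 ⊇ ⋯ ⊇ N m`. -/
def IsNested {n m : ℕ} (E : ReqSeq n m) : Prop :=
  ∀ s t : Fin m, s ≤ t → E.N t ⊆ E.N s

/-- `E_{n,m,q}`: request sequences with total quantity `q`. -/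
def seqs (n m : ℕ) (q : ℝ) : Set (ReqSeq n m) := {E | ∑ t, E.q t = q}

/-- The harmonic-series matrix applied to a vector: `(Hℓ)(i) = Σ_{j ≤ i} ℓ(j)/(n − j + 1)`
(in 1-indexed notation). -/
noncomputable def Hvec (n : ℕ) (ℓ : Fin n → ℝ) : Fin n → ℝ :=
  fun i => ∑ j ∈ Finset.univ.filter (fun j => j ≤ i), ℓ j / ((n - (j : ℕ) : ℕ) : ℝ)

/-- The water-filling height of online node `t`: the common post-allocation load of
the offline nodes in the support of `x t`. -/
noncomputable def height {n m : ℕ} (x : Fin m → Fin n → ℝ) (t : Fin m) : ℝ :=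
  sSup {c | ∃ i, 0 < x t i ∧ c = x t i + prevLoad x t i}

/-- A deterministic allocation policy: maps the history of past
`(neighborhood, quantity, allocation)` triples and the current `(neighborhood, quantity)`
to an allocation. -/
def DetPolicy (n : ℕ) : Type :=
  List (Finset (Fin n) × ℝ × (Fin n → ℝ)) → Finset (Fin n) × ℝ → (Fin n → ℝ)

/-- A valid deterministic policy always outputs a feasible allocation. -/
def ValidDetPolicy {n : ℕ} (A : DetPolicy n) : Prop :=
  ∀ h N qt, N.Nonempty → 0 < qt → A h (N, qt) ∈ allocSet n N qt

/-- The history produced by running policy `A` on sequence `E` for `t` steps. -/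
def hist {n m : ℕ} (A : DetPolicy n) (E : ReqSeq n m) :
    ℕ → List (Finset (Fin n) × ℝ × (Fin n → ℝ))
  | 0 => []
  | t + 1 =>
    if ht : t < m then
      hist A E t ++ [(E.N ⟨t, ht⟩, E.q ⟨t, ht⟩, A (hist A E t) (E.N ⟨t, ht⟩, E.q ⟨t, ht⟩))]
    else hist A E t

/-- The allocation chosen by policy `A` on arrival `t` of sequence `E`. -/
def detAlloc {n m : ℕ} (A : DetPolicy n) (E : ReqSeq n m) (t : Fin m) : Fin n → ℝ :=
  A (hist A E t.val) (E.N t, E.q t)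

/-- `A(E)`: the final load vector of deterministic policy `A` on `E`. -/
def detLoad {n m : ℕ} (A : DetPolicy n) (E : ReqSeq n m) : Fin n → ℝ :=
  ∑ t, detAlloc A E t

instance (n : ℕ) : MeasurableSpace (DetPolicy n) := ⊤

/-- A randomized allocation policy: a probability distribution over deterministic policies
(almost surely valid). -/
structure RandPolicy (n : ℕ) where
  μ : Measure (DetPolicy n)
  prob : IsProbabilityMeasure μ
  valid : ∀ᵐ p ∂μ, ValidDetPolicy p

/-- `𝔼[A(E)]`: coordinatewise expected load of randomized policy `A` on `E`. -/
noncomputable def expLoad {n m : ℕ} (A : RandPolicy n) (E : ReqSeq n m) : Fin n → ℝ :=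
  fun i => ∫ p, detLoad p E i ∂A.μ


/-!
Build `E'` online against `A`: online node `t` receives a neighbourhood of the same size as in
`Ẽ`, made of the offline nodes with the largest expected load so far among those adjacent to all
earlier online nodes. This is well defined because `A` acts on node `t` knowing only the arrivals up
to `t`. Then `E'` is nested with the same neighbourhood sizes as `Ẽ`, so it is `Ẽ` with the
offline nodes permuted, and `OPT(E') ∼ OPT(Ẽ)`.

The expected load of `A` majorizes the water-filling load after every arrival. With equal totals,
`a ⪰ b` amounts to `∑ (aᵢ - s)⁺ ≥ ∑ (bᵢ - s)⁺` at every level `s`. `A` adds its mass on a top set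
of its current load, while water-filling raises a set of the same size to a common level `h`:
above `h` no excess of the water-filling load changes, and below `h` its deficits `∑ (s - bᵢ)⁺`
come only from outside its neighbourhood, where they are dominated by the deficits of `A` outside
its top set.
-/

section TopSets

variable {α : Type*}

def IsTopIn (w : α → ℝ) (P S : Finset α) : Prop :=
  S ⊆ P ∧ ∀ i ∈ P, i ∉ S → ∀ j ∈ S, w i ≤ w j

theorem exists_isTopIn_card (w : α → ℝ) (P : Finset α) {k : ℕ} (hk : k ≤ #P) :
    ∃ S, #S = k ∧ IsTopIn w P S := by
  classical
  obtain ⟨S, hS, hmax⟩ :=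
    exists_max_image (P.powersetCard k) (fun s => ∑ i ∈ s, w i) (powersetCard_nonempty.2 hk)
  obtain ⟨hSP, hSk⟩ := mem_powersetCard.1 hS
  refine ⟨S, hSk, hSP, fun i hiP hiS j hjS => ?_⟩
  by_contra! hji
  have hi : i ∉ S.erase j := fun h => hiS (mem_of_mem_erase h)
  have hswap : insert i (S.erase j) ∈ P.powersetCard k := by
    refine mem_powersetCard.2 ⟨insert_subset hiP ((erase_subset j S).trans hSP), ?_⟩
    rw [card_insert_of_notMem hi, card_erase_of_mem hjS, hSk,
      Nat.sub_add_cancel (hSk ▸ card_pos.2 ⟨j, hjS⟩)]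
  have := hmax _ hswap
  rw [sum_insert hi, sum_erase_eq_sub hjS] at this
  linarith

theorem IsTopIn.trans {w : α → ℝ} {P S R : Finset α} (hS : IsTopIn w P S)
    (hR : IsTopIn w S R) : IsTopIn w P R := by
  refine ⟨hR.1.trans hS.1, fun i hiP hiR j hjR => ?_⟩
  by_cases hiS : i ∈ S
  · exact hR.2 i hiS hiR j hjR
  · exact hS.2 i hiP hiS j (hR.1 hjR)

noncomputable def reselect (w : α → ℝ) (P S : Finset α) : Finset α :=
  if h : #S ≤ #P then (exists_isTopIn_card w P h).choose else S

theorem card_reselect (w : α → ℝ) (P S : Finset α) : #(reselect w P S) = #S := by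
  unfold reselect
  split_ifs with h
  · exact (exists_isTopIn_card w P h).choose_spec.1
  · rfl

theorem isTopIn_reselect (w : α → ℝ) {P S : Finset α} (h : #S ≤ #P) :
    IsTopIn w P (reselect w P S) := by
  unfold reselect
  rw [dif_pos h]
  exact (exists_isTopIn_card w P h).choose_spec.2

end TopSets

section TopSum

variable {n : ℕ}

theorem sum_le_topSum (v : Fin n → ℝ) (T : Finset (Fin n)) : ∑ i ∈ T, v i ≤ topSum v #T :=
  le_csSup (Set.toFinite _).bddAbove ⟨T, rfl, rfl⟩

theorem topSum_le {v : Fin n → ℝ} {k : ℕ} (hk : k ≤ n) {c : ℝ}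
    (h : ∀ T : Finset (Fin n), #T = k → ∑ i ∈ T, v i ≤ c) : topSum v k ≤ c := by
  obtain ⟨T, -, hT⟩ := exists_subset_card_eq (s := (univ : Finset (Fin n))) (by simpa using hk)
  refine csSup_le ⟨_, T, hT, rfl⟩ ?_
  rintro _ ⟨U, hU, rfl⟩
  exact h U hU

theorem topSum_zero (v : Fin n → ℝ) : topSum v 0 = 0 := by
  simp [topSum, card_eq_zero]

def excess (v : Fin n → ℝ) (s : ℝ) : ℝ := ∑ i, max (v i - s) 0

theorem topSum_le_mul_add_excess (v : Fin n → ℝ) {k : ℕ} (hk : k ≤ n) (s : ℝ) :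
    topSum v k ≤ k * s + excess v s := by
  refine topSum_le hk fun T hT => ?_
  calc ∑ i ∈ T, v i ≤ ∑ i ∈ T, (s + max (v i - s) 0) :=
        sum_le_sum fun i _ => by linarith [le_max_left (v i - s) 0]
    _ = k * s + ∑ i ∈ T, max (v i - s) 0 := by
        rw [sum_add_distrib, sum_const, nsmul_eq_mul, hT]
    _ ≤ k * s + excess v s := by
        gcongr
        exact sum_le_sum_of_subset_of_nonneg (subset_univ T) fun i _ _ => le_max_right _ _

theorem sum_eq_mul_add_excess {v : Fin n → ℝ} {T : Finset (Fin n)} {s : ℝ}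
    (hin : ∀ i ∈ T, s ≤ v i) (hout : ∀ i ∉ T, v i ≤ s) :
    ∑ i ∈ T, v i = #T * s + excess v s := by
  have hexcess : excess v s = ∑ i ∈ T, (v i - s) := by
    rw [excess, ← sum_subset (subset_univ T) fun i _ hi => max_eq_right (by linarith [hout i hi])]
    exact sum_congr rfl fun i hi => max_eq_left (by linarith [hin i hi])
  rw [hexcess, sum_sub_distrib, sum_const, nsmul_eq_mul]
  ring

theorem IsTopIn.sum_eq_mul_inf'_add_excess {v : Fin n → ℝ} {T : Finset (Fin n)}
    (hT : IsTopIn v univ T) (hne : T.Nonempty) :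
    ∑ i ∈ T, v i = #T * T.inf' hne v + excess v (T.inf' hne v) := by
  obtain ⟨j, hj, hjmin⟩ := exists_mem_eq_inf' hne v
  exact sum_eq_mul_add_excess (fun i hi => inf'_le v hi)
    fun i hi => hjmin ▸ hT.2 i (mem_univ i) hi j hj

theorem topSum_eq_sum {v : Fin n → ℝ} {T : Finset (Fin n)} (hT : IsTopIn v univ T) :
    topSum v #T = ∑ i ∈ T, v i := by
  rcases T.eq_empty_or_nonempty with rfl | hne
  · simp [topSum_zero]
  refine le_antisymm ?_ (sum_le_topSum v T)
  rw [hT.sum_eq_mul_inf'_add_excess hne]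
  exact topSum_le_mul_add_excess v ((card_le_univ T).trans_eq (Fintype.card_fin n)) _

theorem exists_topSum_eq_sum (v : Fin n → ℝ) {k : ℕ} (hk : k ≤ n) :
    ∃ T : Finset (Fin n), #T = k ∧ IsTopIn v univ T ∧ topSum v k = ∑ i ∈ T, v i := by
  obtain ⟨T, hTk, hT⟩ := exists_isTopIn_card v univ (by simpa using hk)
  exact ⟨T, hTk, hT, hTk ▸ topSum_eq_sum hT⟩

end TopSum

section Excess

variable {n : ℕ}

theorem excess_le_excess {a b : Fin n → ℝ} (h : ∀ k ≤ n, topSum b k ≤ topSum a k) (s : ℝ) :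
    excess b s ≤ excess a s := by
  classical
  set U := univ.filter (fun i => s < b i)
  have hU : ∑ i ∈ U, b i = #U * s + excess b s :=
    sum_eq_mul_add_excess (fun i hi => (mem_filter.1 hi).2.le)
      fun i hi => not_lt.1 fun hlt => hi (mem_filter.2 ⟨mem_univ i, hlt⟩)
  have hUn : #U ≤ n := (card_le_univ U).trans_eq (Fintype.card_fin n)
  linarith [sum_le_topSum b U, h _ hUn, topSum_le_mul_add_excess a hUn s]

theorem topSum_le_topSum_of_excess_le {a b : Fin n → ℝ} (h : ∀ s, excess b s ≤ excess a s)
    {k : ℕ} (hk : k ≤ n) : topSum b k ≤ topSum a k := by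
  rcases Nat.eq_zero_or_pos k with rfl | hpos
  · simp [topSum_zero]
  obtain ⟨T, hTk, hT, htop⟩ := exists_topSum_eq_sum a hk
  have hne : T.Nonempty := card_pos.1 (hTk ▸ hpos)
  rw [htop, hT.sum_eq_mul_inf'_add_excess hne, hTk]
  linarith [topSum_le_mul_add_excess b hk (T.inf' hne a), h (T.inf' hne a)]

theorem excess_neg (v : Fin n → ℝ) (s : ℝ) :
    excess (-v) (-s) = excess v s - ∑ i, v i + n * s := by
  have h : ∀ i, max ((-v) i - -s) 0 = max (v i - s) 0 - (v i - s) := fun i => by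
    rw [Pi.neg_apply, neg_sub_neg]
    rcases le_total (v i) s with hvs | hsv
    · rw [max_eq_left (sub_nonneg.2 hvs), max_eq_right (sub_nonpos.2 hvs)]; ring
    · rw [max_eq_right (sub_nonpos.2 hsv), max_eq_left (sub_nonneg.2 hsv)]; ring
  simp only [excess, h, sum_sub_distrib, sum_const, card_univ, Fintype.card_fin, nsmul_eq_mul]
  ring

theorem Majorizes.topSum_neg_le {a b : Fin n → ℝ} (h : Majorizes a b) {k : ℕ} (hk : k ≤ n) :
    topSum (-b) k ≤ topSum (-a) k := by
  refine topSum_le_topSum_of_excess_le (fun s => ?_) hk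
  have hb := excess_neg b (-s)
  have ha := excess_neg a (-s)
  rw [neg_neg] at ha hb
  linarith [excess_le_excess h.2 (-s), h.1]

theorem sum_max_sub_le_of_isTopIn {x y : Fin n → ℝ} (h : ∀ k ≤ n, topSum y k ≤ topSum x k)
    {T U : Finset (Fin n)} (hT : IsTopIn x univ T) (hU : #U = #T) (t : ℝ) :
    ∑ i ∈ U, max (y i - t) 0 ≤ ∑ i ∈ T, max (x i - t) 0 := by
  classical
  set U₁ := U.filter (fun i => t < y i)
  obtain ⟨T₁, hT₁k, hT₁⟩ := exists_isTopIn_card x T (hU ▸ card_filter_le U _ : #U₁ ≤ #T)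
  have hy : ∑ i ∈ U, max (y i - t) 0 = ∑ i ∈ U₁, (y i - t) := by
    have hsupp : ∀ i ∈ U, max (y i - t) 0 ≠ 0 → t < y i := fun i _ hi =>
      not_le.1 fun hle => hi (max_eq_right (by linarith))
    rw [← sum_filter_of_ne hsupp]
    exact sum_congr rfl fun i hi => max_eq_left (by linarith [(mem_filter.1 hi).2])
  have hx : ∑ i ∈ T₁, (x i - t) ≤ ∑ i ∈ T, max (x i - t) 0 :=
    (sum_le_sum fun i _ => le_max_left _ _).trans
      (sum_le_sum_of_subset_of_nonneg hT₁.1 fun i _ _ => le_max_right _ _)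
  have htop : topSum x #U₁ = ∑ i ∈ T₁, x i := hT₁k ▸ topSum_eq_sum (hT.trans hT₁)
  have hU₁n : #U₁ ≤ n := (card_le_univ U₁).trans_eq (Fintype.card_fin n)
  rw [hy]
  simp only [sum_sub_distrib, sum_const, nsmul_eq_mul, hT₁k] at hx ⊢
  linarith [sum_le_topSum y U₁, h _ hU₁n]

theorem Majorizes.add_waterfill {a b y z : Fin n → ℝ} {S N : Finset (Fin n)} {q h : ℝ}
    (hab : Majorizes a b) (hS : IsTopIn a univ S) (hcard : #S = #N)
    (hy : y ∈ allocSet n S q) (hz : z ∈ allocSet n N q)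
    (hwf : ∀ i ∈ N, b i + z i = max (b i) h) : Majorizes (a + y) (b + z) := by
  have hsum : ∑ i, (a + y) i = ∑ i, (b + z) i := by
    simp only [Pi.add_apply, sum_add_distrib, hab.1, hy.2.2, hz.2.2]
  refine ⟨hsum, fun k hk => topSum_le_topSum_of_excess_le (fun s => ?_) hk⟩
  -- Above the level `h`, filling changes no excess. Below it, compare the deficits
  -- `∑ (s - ·)⁺`, which come only from outside `N`, resp. outside `S`.
  rcases le_or_gt h s with hhs | hsh
  · calc excess (b + z) s = excess b s := sum_congr rfl fun i _ => ?_
      _ ≤ excess a s := excess_le_excess hab.2 s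
      _ ≤ excess (a + y) s :=
          sum_le_sum fun i _ => max_le_max (by linarith [hy.1 i, (Pi.add_apply a y i)]) le_rfl
    by_cases hi : i ∈ N
    · simp only [Pi.add_apply, hwf i hi]
      rcases le_total (b i) h with hbh | hhb
      · rw [max_eq_right hbh, max_eq_right (by linarith), max_eq_right (by linarith)]
      · rw [max_eq_left hhb]
    · simp [hz.2.1 i hi]
  · have hScompl : IsTopIn (-a) univ Sᶜ := ⟨subset_univ _, fun i _ hi j hj => by
      simpa using hS.2 j (mem_univ j) (mem_compl.1 hj) i (by simpa using hi)⟩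
    have hlow : excess (-(b + z)) (-s) ≤ excess (-(a + y)) (-s) := calc
      excess (-(b + z)) (-s) = ∑ i ∈ Nᶜ, max ((-b) i - -s) 0 := by
          rw [excess, ← sum_add_sum_compl N, sum_eq_zero fun i hi => ?_, zero_add]
          · exact sum_congr rfl fun i hi => by simp [hz.2.1 i (mem_compl.1 hi)]
          · refine max_eq_right ?_
            simp only [Pi.neg_apply, Pi.add_apply, neg_sub_neg]
            linarith [hwf i hi, le_max_right (b i) h]
      _ ≤ ∑ i ∈ Sᶜ, max ((-a) i - -s) 0 :=
          sum_max_sub_le_of_isTopIn (fun k hk => hab.topSum_neg_le hk) hScompl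
            (by simp [card_compl, hcard]) _
      _ = ∑ i ∈ Sᶜ, max ((-(a + y)) i - -s) 0 :=
          sum_congr rfl fun i hi => by simp [hy.2.1 i (mem_compl.1 hi)]
      _ ≤ excess (-(a + y)) (-s) := by
          rw [excess, ← sum_add_sum_compl S]
          exact le_add_of_nonneg_left (sum_nonneg fun i _ => le_max_right _ _)
    linarith [excess_neg (b + z) s, excess_neg (a + y) s]

end Excess

section WaterFilling

variable {n m : ℕ}

theorem isCompact_allocSet (N : Finset (Fin n)) (q : ℝ) : IsCompact (allocSet n N q) := by
  have hclosed : IsClosed (allocSet n N q) := by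
    simp only [allocSet, Set.ofPred_and, Set.ofPred_forall]
    exact (isClosed_iInter fun i => isClosed_le continuous_const (continuous_apply i)).inter <|
      (isClosed_iInter fun i => isClosed_iInter fun _ =>
        isClosed_eq (continuous_apply i) continuous_const).inter <|
      isClosed_eq (continuous_finsetSum _ fun i _ => continuous_apply i) continuous_const
  refine isCompact_Icc.of_isClosed_subset hclosed
    (show allocSet n N q ⊆ Set.Icc 0 fun _ => q from fun x hx => ?_)
  exact ⟨hx.1, fun i => hx.2.2 ▸ single_le_sum (fun j _ => hx.1 j) (mem_univ i)⟩

theorem exists_waterfill (N : Finset (Fin n)) (hN : N.Nonempty) {q : ℝ} (hq : 0 ≤ q)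
    (b : Fin n → ℝ) : ∃ z ∈ allocSet n N q, ∀ y ∈ allocSet n N q,
      N.inf' hN (fun i => y i + b i) ≤ N.inf' hN (fun i => z i + b i) := by
  obtain ⟨i₀, hi₀⟩ := id hN
  have hne : (allocSet n N q).Nonempty :=
    ⟨Pi.single i₀ q, fun i => by by_cases h : i = i₀ <;> simp [h, hq],
      fun i hi => by simp [ne_of_mem_of_not_mem hi₀ hi |>.symm], by simp⟩
  have hcont : Continuous fun y : Fin n → ℝ => N.inf' hN fun i => y i + b i :=
    Continuous.finset_inf'_apply _ fun i _ => (continuous_apply i).add continuous_const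
  obtain ⟨z, hz, hzmax⟩ := (isCompact_allocSet N q).exists_isMaxOn hne hcont.continuousOn
  exact ⟨z, hz, fun y hy => hzmax hy⟩

theorem waterfill_eq_max {N : Finset (Fin n)} (hN : N.Nonempty) {q : ℝ} {b z : Fin n → ℝ}
    (hz : z ∈ allocSet n N q) (hmax : ∀ y ∈ allocSet n N q,
      N.inf' hN (fun i => y i + b i) ≤ N.inf' hN (fun i => z i + b i)) :
    ∀ i ∈ N, b i + z i = max (b i) (N.inf' hN fun j => z j + b j) := by
  set h := N.inf' hN fun j => z j + b j
  have hle : ∀ j ∈ N, h ≤ z j + b j := fun j hj => inf'_le _ hj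
  intro i hi
  rcases (hz.1 i).eq_or_lt with hzi | hzi
  · rw [← hzi, add_zero, max_eq_left (by linarith [hle i hi, hzi])]
  suffices z i + b i ≤ h by rw [max_eq_right (by linarith)]; linarith [hle i hi]
  by_contra! hgt
  -- Move `ε` away from `i` and spread it evenly over `N`: the minimum strictly increases.
  set ε := min (z i) (z i + b i - h)
  have hε : 0 < ε := lt_min hzi (by linarith)
  have hcard : (0 : ℝ) < #N := by exact_mod_cast card_pos.2 hN
  set y : Fin n → ℝ := fun j => z j + (if j ∈ N then ε / #N else 0) - if j = i then ε else 0
  have hy : y ∈ allocSet n N q := by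
    refine ⟨fun j => ?_, fun j hj => ?_, ?_⟩
    · have : 0 ≤ ε / #N := by positivity
      by_cases hji : j = i
      · subst hji
        simp only [y, if_pos hi, ↓reduceIte]
        linarith [min_le_left (z j) (z j + b j - h)]
      · simp only [y, if_neg hji]; split_ifs <;> linarith [hz.1 j]
    · simp [y, hj, hz.2.1 j hj, ne_of_mem_of_not_mem hi hj |>.symm]
    · simp only [y, sum_sub_distrib, sum_add_distrib, hz.2.2, sum_ite_mem, univ_inter,
        sum_const, nsmul_eq_mul, sum_ite_eq', mem_univ, if_true]
      field_simp
      ring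
  have hlt : h < N.inf' hN fun j => y j + b j := by
    refine (lt_inf'_iff hN).2 fun j hj => ?_
    have : 0 < ε / #N := by positivity
    by_cases hji : j = i
    · subst hji
      simp only [y, if_pos hj, ↓reduceIte]
      linarith [min_le_right (z j) (z j + b j - h)]
    · simp only [y, if_pos hj, if_neg hji]; linarith [hle j hj]
  linarith [hmax y hy]

theorem prevLoad_congr {x x' : Fin m → Fin n → ℝ} {t : Fin m} (h : ∀ s < t, x s = x' s) :
    prevLoad x t = prevLoad x' t :=
  funext fun i => sum_congr rfl fun s hs => by rw [h s (mem_filter.1 hs).2]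

theorem exists_isWFAlloc (E : ReqSeq n m) : ∃ x, IsWFAlloc E x := by
  suffices h : ∀ k, ∃ x : Fin m → Fin n → ℝ, ∀ t : Fin m, (t : ℕ) < k →
      x t ∈ allocSet n (E.N t) (E.q t) ∧ ∀ y ∈ allocSet n (E.N t) (E.q t),
        reqMinOn E t (fun i => y i + prevLoad x t i) ≤
          reqMinOn E t (fun i => x t i + prevLoad x t i) by
    obtain ⟨x, hx⟩ := h m
    exact ⟨x, fun t => (hx t t.isLt).1, fun t => (hx t t.isLt).2⟩
  intro k
  induction k with
  | zero => exact ⟨0, fun t ht => absurd ht (Nat.not_lt_zero _)⟩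
  | succ k ih =>
    obtain ⟨x, hx⟩ := ih
    by_cases hk : k < m
    · set t₀ : Fin m := ⟨k, hk⟩
      obtain ⟨z, hz, hzmax⟩ := exists_waterfill (E.N t₀) (E.N_nonempty t₀) (E.q_pos t₀).le
        (prevLoad x t₀)
      refine ⟨Function.update x t₀ z, fun t ht => ?_⟩
      have hprev : prevLoad (Function.update x t₀ z) t = prevLoad x t :=
        prevLoad_congr fun s hs =>
          Function.update_of_ne (hs.trans_le (Fin.le_def.2 (Nat.lt_succ_iff.1 ht))).ne z x
      rw [hprev]
      rcases Nat.lt_succ_iff_lt_or_eq.1 ht with ht | ht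
      · rw [Function.update_of_ne fun h => ht.ne (congrArg Fin.val h)]
        exact hx t ht
      · obtain rfl : t = t₀ := Fin.ext ht
        rw [Function.update_self]
        exact ⟨hz, hzmax⟩
    · exact ⟨x, fun t ht => hx t (by omega)⟩

theorem IsWFAlloc.eq_max {E : ReqSeq n m} {x : Fin m → Fin n → ℝ} (hx : IsWFAlloc E x)
    (t : Fin m) : ∀ i ∈ E.N t, prevLoad x t i + x t i =
      max (prevLoad x t i) (reqMinOn E t fun j => x t j + prevLoad x t j) :=
  waterfill_eq_max (E.N_nonempty t) (hx.1 t) (hx.2 t)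

end WaterFilling

section Policies

variable {n m : ℕ}

def partialLoad (x : Fin m → Fin n → ℝ) (T : ℕ) : Fin n → ℝ :=
  ∑ s ∈ univ.filter (fun s : Fin m => (s : ℕ) < T), x s

theorem prevLoad_eq_partialLoad (x : Fin m → Fin n → ℝ) (t : Fin m) :
    prevLoad x t = partialLoad x t := by
  funext i
  simp only [prevLoad, partialLoad, Finset.sum_apply]
  exact sum_congr (filter_congr fun s _ => Fin.lt_def) fun _ _ => rfl

theorem partialLoad_zero (x : Fin m → Fin n → ℝ) : partialLoad x 0 = 0 := by
  simp [partialLoad]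

theorem partialLoad_succ (x : Fin m → Fin n → ℝ) {T : ℕ} (hT : T < m) :
    partialLoad x (T + 1) = partialLoad x T + x ⟨T, hT⟩ := by
  have hfilter : univ.filter (fun s : Fin m => (s : ℕ) < T + 1) =
      insert ⟨T, hT⟩ (univ.filter fun s : Fin m => (s : ℕ) < T) := by
    ext s
    simp [Fin.ext_iff, le_iff_eq_or_lt]
  rw [partialLoad, hfilter, sum_insert (by simp), add_comm, partialLoad]

theorem partialLoad_of_le (x : Fin m → Fin n → ℝ) {T : ℕ} (hT : m ≤ T) :
    partialLoad x T = ∑ t, x t := by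
  rw [partialLoad, filter_true_of_mem fun s _ => s.isLt.trans_le hT]

theorem partialLoad_congr {x x' : Fin m → Fin n → ℝ} {T : ℕ}
    (h : ∀ s : Fin m, (s : ℕ) < T → x s = x' s) : partialLoad x T = partialLoad x' T :=
  sum_congr rfl fun s hs => h s (mem_filter.1 hs).2

theorem hist_congr (p : DetPolicy n) {E₁ E₂ : ReqSeq n m} {k : ℕ}
    (h : ∀ s : Fin m, (s : ℕ) < k → E₁.N s = E₂.N s ∧ E₁.q s = E₂.q s) :
    hist p E₁ k = hist p E₂ k := by
  induction k with
  | zero => rfl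
  | succ k ih =>
    have ih' := ih fun s hs => h s (Nat.lt_succ_of_lt hs)
    unfold hist
    split_ifs with hk
    · obtain ⟨hN, hq⟩ := h ⟨k, hk⟩ (Nat.lt_succ_self k)
      rw [ih', hN, hq]
    · exact ih'

theorem detAlloc_congr (p : DetPolicy n) {E₁ E₂ : ReqSeq n m} {t : Fin m}
    (h : ∀ s ≤ t, E₁.N s = E₂.N s ∧ E₁.q s = E₂.q s) : detAlloc p E₁ t = detAlloc p E₂ t := by
  obtain ⟨hN, hq⟩ := h t le_rfl
  rw [detAlloc, detAlloc, hist_congr p fun s hs => h s (Fin.le_def.2 hs.le), hN, hq]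

theorem integrable_apply_of_ae_mem_allocSet {Ω : Type*} [MeasurableSpace Ω] {μ : Measure Ω}
    [IsFiniteMeasure μ] {f : Ω → Fin n → ℝ} {N : Finset (Fin n)} {q : ℝ}
    (hf : ∀ᵐ ω ∂μ, f ω ∈ allocSet n N q) {i : Fin n}
    (hmeas : AEStronglyMeasurable (fun ω => f ω i) μ) : Integrable (fun ω => f ω i) μ := by
  refine Integrable.of_bound hmeas q ?_
  filter_upwards [hf] with ω hω
  rw [Real.norm_of_nonneg (hω.1 i), ← hω.2.2]
  exact single_le_sum (fun j _ => hω.1 j) (mem_univ i)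

theorem integral_mem_allocSet {Ω : Type*} [MeasurableSpace Ω] {μ : Measure Ω}
    [IsProbabilityMeasure μ] {f : Ω → Fin n → ℝ} {N : Finset (Fin n)} {q : ℝ}
    (hf : ∀ᵐ ω ∂μ, f ω ∈ allocSet n N q)
    (hmeas : ∀ i, AEStronglyMeasurable (fun ω => f ω i) μ) :
    (fun i => ∫ ω, f ω i ∂μ) ∈ allocSet n N q := by
  refine ⟨fun i => integral_nonneg_of_ae ?_, fun i hi => ?_, ?_⟩
  · filter_upwards [hf] with ω hω using hω.1 i
  · refine integral_eq_zero_of_ae ?_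
    filter_upwards [hf] with ω hω using hω.2.1 i hi
  · rw [← integral_finsetSum _ fun i _ => integrable_apply_of_ae_mem_allocSet hf (hmeas i),
      integral_congr_ae (hf.mono fun ω hω => hω.2.2), integral_const, probReal_univ, one_smul]

noncomputable def expAlloc (A : RandPolicy n) (E : ReqSeq n m) (t : Fin m) : Fin n → ℝ :=
  fun i => ∫ p, detAlloc p E t i ∂A.μ

theorem ae_detAlloc_mem (A : RandPolicy n) (E : ReqSeq n m) (t : Fin m) :
    ∀ᵐ p ∂A.μ, detAlloc p E t ∈ allocSet n (E.N t) (E.q t) := by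
  filter_upwards [A.valid] with p hp using hp _ _ _ (E.N_nonempty t) (E.q_pos t)

theorem expAlloc_mem (A : RandPolicy n) (E : ReqSeq n m) (t : Fin m) :
    expAlloc A E t ∈ allocSet n (E.N t) (E.q t) :=
  have := A.prob
  integral_mem_allocSet (ae_detAlloc_mem A E t) fun _ => measurable_from_top.aestronglyMeasurable

theorem expLoad_eq_sum (A : RandPolicy n) (E : ReqSeq n m) :
    expLoad A E = ∑ t, expAlloc A E t := by
  have := A.prob
  funext i
  simp only [expLoad, detLoad, Finset.sum_apply]
  exact integral_finsetSum _ fun t _ => integrable_apply_of_ae_mem_allocSet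
    (ae_detAlloc_mem A E t) measurable_from_top.aestronglyMeasurable

theorem expAlloc_congr (A : RandPolicy n) {E₁ E₂ : ReqSeq n m} {t : Fin m}
    (h : ∀ s ≤ t, E₁.N s = E₂.N s ∧ E₁.q s = E₂.q s) : expAlloc A E₁ t = expAlloc A E₂ t := by
  funext i
  exact integral_congr_ae (ae_of_all _ fun p => congrFun (detAlloc_congr p h) i)

end Policies

section Relabel

variable {n m : ℕ}

theorem majorizes_refl (v : Fin n → ℝ) : Majorizes v v :=
  ⟨rfl, fun _ _ => le_rfl⟩

theorem topSum_comp_perm (v : Fin n → ℝ) (σ : Equiv.Perm (Fin n)) (k : ℕ) :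
    topSum (v ∘ σ) k = topSum v k := by
  unfold topSum
  congr 1
  ext r
  constructor
  · rintro ⟨s, hs, rfl⟩
    exact ⟨s.map σ.toEmbedding, by simpa using hs, by simp [sum_map]⟩
  · rintro ⟨s, hs, rfl⟩
    exact ⟨s.map σ.symm.toEmbedding, by simpa using hs, by simp [sum_map]⟩

theorem majorizes_comp_perm_left {u v : Fin n → ℝ} (σ : Equiv.Perm (Fin n)) :
    Majorizes (u ∘ σ) v ↔ Majorizes u v := by
  simp only [Majorizes, topSum_comp_perm, Function.comp_apply, Equiv.sum_comp σ u]

theorem majorizes_comp_perm_right {u v : Fin n → ℝ} (σ : Equiv.Perm (Fin n)) :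
    Majorizes u (v ∘ σ) ↔ Majorizes u v := by
  simp only [Majorizes, topSum_comp_perm, Function.comp_apply, Equiv.sum_comp σ v]

section

variable {E₁ E₂ : ReqSeq n m} {σ : Equiv.Perm (Fin n)}

theorem comp_symm_mem_loads (hN : ∀ t i, σ i ∈ E₂.N t ↔ i ∈ E₁.N t) (hq : E₁.q = E₂.q)
    {ℓ : Fin n → ℝ} (hℓ : ℓ ∈ loads E₁) : ℓ ∘ σ.symm ∈ loads E₂ := by
  obtain ⟨x, hx, rfl⟩ := hℓ
  refine ⟨fun t => x t ∘ σ.symm, fun t => ⟨fun i => (hx t).1 _, fun i hi => ?_, ?_⟩, ?_⟩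
  · exact (hx t).2.1 _ fun h => hi (by simpa using (hN t _).2 h)
  · rw [← hq, ← (hx t).2.2]
    exact Equiv.sum_comp σ.symm (x t)
  · funext i
    simp

theorem IsOpt.comp_symm (hN : ∀ t i, σ i ∈ E₂.N t ↔ i ∈ E₁.N t) (hq : E₁.q = E₂.q)
    {ℓ : Fin n → ℝ} (hℓ : IsOpt E₁ ℓ) : IsOpt E₂ (ℓ ∘ σ.symm) := by
  have hN' : ∀ t i, σ.symm i ∈ E₁.N t ↔ i ∈ E₂.N t := fun t i => by
    rw [← hN, Equiv.apply_symm_apply]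
  refine ⟨comp_symm_mem_loads hN hq hℓ.1, fun ℓ' hℓ' => ?_⟩
  have hmaj := hℓ.2 _ (comp_symm_mem_loads hN' hq.symm hℓ')
  have hcomp : (ℓ ∘ σ.symm) ∘ σ = ℓ := by
    funext i
    simp
  rw [Equiv.symm_symm, ← hcomp, majorizes_comp_perm_right] at hmaj
  rwa [majorizes_comp_perm_left] at hmaj

theorem optLoad_majorizes_of_perm (hN : ∀ t i, σ i ∈ E₂.N t ↔ i ∈ E₁.N t)
    (hq : E₁.q = E₂.q) : Majorizes (optLoad E₁) (optLoad E₂) := by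
  have hN' : ∀ t i, σ.symm i ∈ E₁.N t ↔ i ∈ E₂.N t := fun t i => by
    rw [← hN, Equiv.apply_symm_apply]
  by_cases h₂ : ∃ ℓ, IsOpt E₂ ℓ
  · have h₁ : ∃ ℓ, IsOpt E₁ ℓ := ⟨_, h₂.choose_spec.comp_symm hN' hq.symm⟩
    have hopt₁ : IsOpt E₁ (optLoad E₁) := by
      rw [optLoad, dif_pos h₁]
      exact h₁.choose_spec
    have hopt₂ : IsOpt E₂ (optLoad E₂) := by
      rw [optLoad, dif_pos h₂]
      exact h₂.choose_spec
    exact (majorizes_comp_perm_left σ.symm).1 (hopt₂.2 _ (comp_symm_mem_loads hN hq hopt₁.1))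
  · have h₁ : ¬ ∃ ℓ, IsOpt E₁ ℓ := fun ⟨ℓ, hℓ⟩ => h₂ ⟨_, hℓ.comp_symm hN hq⟩
    rw [optLoad, optLoad, dif_neg h₁, dif_neg h₂]
    exact majorizes_refl 0

end

theorem mem_iff_val_lt_card_of_isLowerSet {S : Finset (Fin m)} (hS : IsLowerSet (S : Set (Fin m)))
    (t : Fin m) : t ∈ S ↔ (t : ℕ) < #S := by
  constructor
  · intro ht
    have hsub : Iic t ⊆ S := fun s hs => hS (mem_Iic.1 hs) ht
    simpa [Fin.card_Iic] using card_le_card hsub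
  · intro hlt
    by_contra ht
    have hsub : S ⊆ Iio t := fun s hs => mem_Iio.2 (lt_of_not_ge fun hts => ht (hS hts hs))
    have := card_le_card hsub
    rw [Fin.card_Iio] at this
    omega

variable {α : Type*}

def depth [DecidableEq α] (N : Fin m → Finset α) (i : α) : ℕ := #(univ.filter fun t => i ∈ N t)

theorem mem_iff_lt_depth [DecidableEq α] {N : Fin m → Finset α} (hN : Antitone N) (t : Fin m)
    (i : α) : i ∈ N t ↔ (t : ℕ) < depth N i :=
  (mem_filter_univ (p := fun t => i ∈ N t) t).symm.trans <| mem_iff_val_lt_card_of_isLowerSet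
    (fun _ _ hba ha => by simpa using hN hba (by simpa using ha)) t

theorem card_filter_lt_depth [Fintype α] [DecidableEq α] {N : Fin m → Finset α} (hN : Antitone N)
    (k : ℕ) : #(univ.filter fun i => k < depth N i) = if h : k < m then #(N ⟨k, h⟩) else 0 := by
  split_ifs with hk
  · congr 1
    ext i
    simp [mem_iff_lt_depth hN ⟨k, hk⟩ i]
  · refine card_eq_zero.2 (filter_false_of_mem fun i _ => ?_)
    have : depth N i ≤ m := (card_filter_le _ _).trans_eq (by simp)
    omega

theorem card_filter_eq_eq_of_card_filter_lt_eq [Fintype α] [DecidableEq α] {f g : α → ℕ}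
    (h : ∀ k, #(univ.filter fun i => k < f i) = #(univ.filter fun i => k < g i)) (d : ℕ) :
    #(univ.filter fun i => f i = d) = #(univ.filter fun i => g i = d) := by
  have hsplit : ∀ φ : α → ℕ, #(univ.filter fun i => d ≤ φ i) =
      #(univ.filter fun i => φ i = d) + #(univ.filter fun i => d < φ i) := fun φ => by
    rw [← card_union_of_disjoint (disjoint_filter.2 fun i _ h₁ h₂ => h₂.ne' h₁), ← filter_or]
    exact congrArg card (filter_congr fun i _ => le_iff_eq_or_lt.trans (or_congr_left eq_comm))
  have hle : #(univ.filter fun i => d ≤ f i) = #(univ.filter fun i => d ≤ g i) := by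
    cases d with
    | zero => simp
    | succ k => simpa only [Nat.succ_le_iff] using h k
  have := hsplit f
  have := hsplit g
  have := h d
  omega

theorem exists_perm_comp_eq [Fintype α] {β : Type*} [DecidableEq β] {f g : α → β}
    (h : ∀ d, #(univ.filter fun i => f i = d) = #(univ.filter fun i => g i = d)) :
    ∃ σ : Equiv.Perm α, ∀ i, g (σ i) = f i :=
  ⟨Equiv.ofFiberEquiv fun d => Fintype.equivOfCardEq (by simp only [Fintype.card_subtype, h]),
    Equiv.ofFiberEquiv_map _⟩

theorem exists_perm_of_antitone [Fintype α] [DecidableEq α] {C D : Fin m → Finset α}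
    (hC : Antitone C) (hD : Antitone D) (hcard : ∀ t, #(C t) = #(D t)) :
    ∃ σ : Equiv.Perm α, ∀ t i, σ i ∈ D t ↔ i ∈ C t := by
  have hlt : ∀ k, #(univ.filter fun i => k < depth C i) =
      #(univ.filter fun i => k < depth D i) := fun k => by
    simp only [card_filter_lt_depth hC, card_filter_lt_depth hD, hcard]
  obtain ⟨σ, hσ⟩ := exists_perm_comp_eq (card_filter_eq_eq_of_card_filter_lt_eq hlt)
  exact ⟨σ, fun t i => by rw [mem_iff_lt_depth hD, mem_iff_lt_depth hC, hσ]⟩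

end Relabel

section Deviation

variable {n m : ℕ}

theorem exists_isWFAlloc_wfLoad_eq (E : ReqSeq n m) :
    ∃ x, IsWFAlloc E x ∧ wfLoad E = ∑ t, x t := by
  have h := exists_isWFAlloc E
  exact ⟨h.choose, h.choose_spec, by rw [wfLoad, dif_pos h]⟩

theorem IsTopIn.add_of_mem_allocSet {a y : Fin n → ℝ} {S : Finset (Fin n)} {q : ℝ}
    (h : IsTopIn a univ S) (hy : y ∈ allocSet n S q) : IsTopIn (a + y) univ S :=
  ⟨h.1, fun i _ hi j hj => by
    simp only [Pi.add_apply, hy.2.1 i hi, add_zero]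
    linarith [h.2 i (mem_univ i) hi j hj, hy.1 j]⟩

theorem majorizes_partialLoad_of_isTopIn {E E' : ReqSeq n m} {x y : Fin m → Fin n → ℝ}
    (hx : IsWFAlloc E x) (hy : ∀ t, y t ∈ allocSet n (E'.N t) (E.q t))
    (hcard : ∀ t, #(E'.N t) = #(E.N t))
    (htop : ∀ t : Fin m, IsTopIn (partialLoad y t) univ (E'.N t)) :
    ∀ T ≤ m, Majorizes (partialLoad y T) (partialLoad x T) := by
  intro T hT
  induction T with
  | zero =>
    rw [partialLoad_zero, partialLoad_zero]
    exact majorizes_refl 0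
  | succ T ih =>
    have hTm : T < m := hT
    have hwf := hx.eq_max ⟨T, hTm⟩
    rw [prevLoad_eq_partialLoad] at hwf
    rw [partialLoad_succ y hTm, partialLoad_succ x hTm]
    exact (ih hTm.le).add_waterfill (htop _) (hcard _) (hy _) (hx.1 _) hwf

def commonNbhd (N : Fin m → Finset (Fin n)) (T : ℕ) : Finset (Fin n) :=
  univ.filter fun i => ∀ s : Fin m, (s : ℕ) < T → i ∈ N s

theorem commonNbhd_zero (N : Fin m → Finset (Fin n)) : commonNbhd N 0 = univ := by
  ext i
  simp [commonNbhd]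

theorem commonNbhd_succ (N : Fin m → Finset (Fin n)) {T : ℕ} (hT : T < m) :
    commonNbhd N (T + 1) = commonNbhd N T ∩ N ⟨T, hT⟩ := by
  ext i
  simp only [commonNbhd, mem_filter, mem_univ, true_and, mem_inter]
  constructor
  · intro h
    exact ⟨fun s hs => h s (Nat.lt_succ_of_lt hs), h _ (Nat.lt_succ_self T)⟩
  · rintro ⟨h, hT⟩ s hs
    rcases Nat.lt_succ_iff_lt_or_eq.1 hs with hs | hs
    · exact h s hs
    · exact (Fin.ext hs : s = ⟨T, _⟩) ▸ hT

theorem commonNbhd_congr {N N' : Fin m → Finset (Fin n)} {T : ℕ}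
    (h : ∀ s : Fin m, (s : ℕ) < T → N s = N' s) : commonNbhd N T = commonNbhd N' T :=
  filter_congr fun i _ => forall_congr' fun s => imp_congr_right fun hs => by rw [h s hs]

section Reselect

variable {E E' : ReqSeq n m} {y : Fin m → Fin n → ℝ}

theorem card_le_card_commonNbhd (hE : IsNested E)
    (hN : ∀ t, E'.N t = reselect (partialLoad y t) (commonNbhd E'.N t) (E.N t)) :
    ∀ t : Fin m, #(E.N t) ≤ #(commonNbhd E'.N t) := by
  suffices h : ∀ T (hT : T < m), #(E.N ⟨T, hT⟩) ≤ #(commonNbhd E'.N T) from fun t => h t t.isLt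
  intro T
  induction T with
  | zero => exact fun _ => (commonNbhd_zero E'.N).symm ▸ card_le_univ _
  | succ T ih =>
    intro hT
    have hsub : E'.N ⟨T, by omega⟩ ⊆ commonNbhd E'.N T :=
      (hN _).symm ▸ (isTopIn_reselect _ (ih (by omega))).1
    rw [commonNbhd_succ _ (by omega), inter_eq_right.2 hsub, hN, card_reselect]
    exact card_le_card (hE _ _ (Fin.le_def.2 (Nat.le_succ T)))

theorem subset_commonNbhd_of_reselect (hE : IsNested E)
    (hN : ∀ t, E'.N t = reselect (partialLoad y t) (commonNbhd E'.N t) (E.N t)) (t : Fin m) :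
    E'.N t ⊆ commonNbhd E'.N t :=
  (hN t).symm ▸ (isTopIn_reselect _ (card_le_card_commonNbhd hE hN t)).1

theorem isNested_of_reselect (hE : IsNested E)
    (hN : ∀ t, E'.N t = reselect (partialLoad y t) (commonNbhd E'.N t) (E.N t)) :
    IsNested E' := by
  intro s t hst i hi
  rcases hst.eq_or_lt with rfl | hlt
  · exact hi
  exact (mem_filter.1 (subset_commonNbhd_of_reselect hE hN t hi)).2 s hlt

theorem isTopIn_of_reselect (hE : IsNested E)
    (hN : ∀ t, E'.N t = reselect (partialLoad y t) (commonNbhd E'.N t) (E.N t))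
    (hy : ∀ t, y t ∈ allocSet n (E'.N t) (E.q t)) :
    ∀ t : Fin m, IsTopIn (partialLoad y t) univ (E'.N t) := by
  suffices h : ∀ T (hT : T < m), IsTopIn (partialLoad y T) univ (E'.N ⟨T, hT⟩) from
    fun t => h t t.isLt
  intro T
  induction T with
  | zero => exact fun _ => ⟨subset_univ _, fun _ _ _ _ _ => by simp [partialLoad_zero]⟩
  | succ T ih =>
    intro hT
    have hprev : IsTopIn (partialLoad y (T + 1)) univ (E'.N ⟨T, by omega⟩) :=
      partialLoad_succ y (by omega : T < m) ▸ (ih (by omega)).add_of_mem_allocSet (hy _)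
    have hcommon : commonNbhd E'.N (T + 1) = E'.N ⟨T, by omega⟩ := by
      rw [commonNbhd_succ _ (by omega)]
      exact inter_eq_right.2 (subset_commonNbhd_of_reselect hE hN ⟨T, by omega⟩)
    have hlast : IsTopIn (partialLoad y (T + 1)) (commonNbhd E'.N (T + 1)) (E'.N ⟨T + 1, hT⟩) := by
      rw [hN ⟨T + 1, hT⟩]
      exact isTopIn_reselect _ (card_le_card_commonNbhd hE hN _)
    rw [hcommon] at hlast
    exact hprev.trans hlast

end Reselect

/-- Stage `T` has reselected the neighbourhoods of the online nodes before `T`. Reselecting node `T`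
looks only at `A`'s allocations to earlier nodes, which later stages leave unchanged
(`detAlloc_congr`); this is why the final stage `deviation` satisfies `deviation_N`. -/
noncomputable def adaptSeq (A : RandPolicy n) (E : ReqSeq n m) : ℕ → ReqSeq n m
  | 0 => E
  | T + 1 =>
    let E' := adaptSeq A E T
    { N := fun s => if (s : ℕ) = T then
          reselect (partialLoad (expAlloc A E') T) (commonNbhd E'.N T) (E'.N s) else E'.N s
      q := E'.q
      N_nonempty := fun s => by
        split_ifs
        · exact card_pos.1 ((card_reselect _ _ _).symm ▸ card_pos.2 (E'.N_nonempty s))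
        · exact E'.N_nonempty s
      q_pos := E'.q_pos }

theorem adaptSeq_q (A : RandPolicy n) (E : ReqSeq n m) : ∀ T, (adaptSeq A E T).q = E.q
  | 0 => rfl
  | T + 1 => adaptSeq_q A E T

theorem adaptSeq_N_of_le (A : RandPolicy n) (E : ReqSeq n m) {s : Fin m} :
    ∀ T ≤ (s : ℕ), (adaptSeq A E T).N s = E.N s
  | 0, _ => rfl
  | T + 1, hT => by
    simp only [adaptSeq, if_neg (by omega : (s : ℕ) ≠ T)]
    exact adaptSeq_N_of_le A E T (by omega)

theorem adaptSeq_N_of_lt (A : RandPolicy n) (E : ReqSeq n m) {s : Fin m} {T : ℕ}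
    (hs : (s : ℕ) < T) : ∀ T' ≥ T, (adaptSeq A E T').N s = (adaptSeq A E T).N s := by
  refine Nat.le_induction rfl fun T' hT' ih => ?_
  simp only [adaptSeq, if_neg (by omega : (s : ℕ) ≠ T')]
  exact ih

noncomputable def deviation (A : RandPolicy n) (E : ReqSeq n m) : ReqSeq n m :=
  adaptSeq A E m

theorem deviation_q (A : RandPolicy n) (E : ReqSeq n m) : (deviation A E).q = E.q :=
  adaptSeq_q A E m

theorem deviation_N (A : RandPolicy n) (E : ReqSeq n m) (t : Fin m) :
    (deviation A E).N t = reselect (partialLoad (expAlloc A (deviation A E)) t)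
      (commonNbhd (deviation A E).N t) (E.N t) := by
  set F := adaptSeq A E t
  have hagree : ∀ s : Fin m, (s : ℕ) < t → F.N s = (deviation A E).N s := fun s hs =>
    (adaptSeq_N_of_lt A E hs m t.isLt.le).symm
  have hq : F.q = (deviation A E).q := by rw [adaptSeq_q, deviation_q]
  have hload : partialLoad (expAlloc A F) t = partialLoad (expAlloc A (deviation A E)) t :=
    partialLoad_congr fun s hs => expAlloc_congr A fun r hr =>
      ⟨hagree r (lt_of_le_of_lt (Fin.le_def.1 hr) hs), congrFun hq r⟩
  rw [deviation, adaptSeq_N_of_lt A E (Nat.lt_succ_self t) m t.isLt, ← deviation, ← hload,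
    ← commonNbhd_congr hagree, ← adaptSeq_N_of_le A E t le_rfl]
  exact if_pos rfl

end Deviation

/-- **Lemma (Policy Deviation).** For any (possibly randomized) allocation policy `A` and
any nested sequence `Ẽ ∈ E^nest_{n,m,q}`, there is a nested sequence `E' ∈ E^nest_{n,m,q}`
with `WF(Ẽ) ⪯ 𝔼[A(E')]` and `OPT(Ẽ) ∼ OPT(E')`. -/
theorem policy_deviation (n m : ℕ) (q : ℝ)
    (A : RandPolicy n) (Etil : ReqSeq n m) (hEtil : Etil ∈ seqs n m q)
    (hnest : IsNested Etil) :
    ∃ E' : ReqSeq n m, E' ∈ seqs n m q ∧ IsNested E' ∧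
      Majorizes (expLoad A E') (wfLoad Etil) ∧
      (Majorizes (optLoad Etil) (optLoad E') ∧ Majorizes (optLoad E') (optLoad Etil)) := by
  set E' := deviation A Etil
  have hq : E'.q = Etil.q := deviation_q A Etil
  have hN := deviation_N A Etil
  have hy : ∀ t, expAlloc A E' t ∈ allocSet n (E'.N t) (Etil.q t) := fun t =>
    hq ▸ expAlloc_mem A E' t
  have hcard : ∀ t, #(E'.N t) = #(Etil.N t) := fun t => by rw [hN, card_reselect]
  have hnest' : IsNested E' := isNested_of_reselect hnest hN
  obtain ⟨x, hx, hwf⟩ := exists_isWFAlloc_wfLoad_eq Etil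
  obtain ⟨σ, hσ⟩ := exists_perm_of_antitone hnest hnest' fun t => (hcard t).symm
  refine ⟨E', show ∑ t, E'.q t = q by rwa [hq], hnest', ?_,
    optLoad_majorizes_of_perm hσ hq.symm, ?_⟩
  · rw [hwf, expLoad_eq_sum, ← partialLoad_of_le _ le_rfl, ← partialLoad_of_le _ le_rfl]
    exact majorizes_partialLoad_of_isTopIn hx hy hcard (isTopIn_of_reselect hnest hN hy) m le_rfl
  · exact optLoad_majorizes_of_perm (σ := σ.symm) (fun t i => by rw [← hσ, σ.apply_symm_apply]) hq
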